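/- Let (X_n)_{n∈ℕ} be a sequence of nonzero real or complex Banach spaces. If the ℓ^∞-sum ℓ^∞((X_n)_{n∈ℕ}) (bounded sequences (x_n) with x_n ∈ X_n and norm sup_n ‖x_n‖) is lush, then each X_n is lush. -/

import Mathlib

open scoped BigOperators

/-- The open slice `S(B_X, f, α) = {x ∈ B_X : Re f(x) > 1 - α}` of the closed unit ball. -/
def Slice (𝕜 : Type*) {X : Type*} [RCLike 𝕜] [NormedAddCommGroup X] [NormedSpace 𝕜 X]
    (f : X →L[𝕜] 𝕜) (α : ℝ) : Set X :=
  {x | ‖x‖ ≤ 1 ∧ 1 - α < RCLike.re (f x)}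

/-- The convex hull of `𝕋 · S(B_X, f, α)`, i.e. all convex combinations of rotated points of
the slice `S(B_X, f, α)`. -/
def ConvRotSlice (𝕜 : Type*) {X : Type*} [RCLike 𝕜] [NormedAddCommGroup X] [NormedSpace 𝕜 X]
    (f : X →L[𝕜] 𝕜) (α : ℝ) : Set X :=
  {x | ∃ (n : ℕ) (t : Fin n → ℝ) (ω : Fin n → 𝕜) (s : Fin n → X),
    (∀ k, 0 ≤ t k) ∧ (∑ k, t k) = 1 ∧ (∀ k, ‖ω k‖ = 1) ∧ (∀ k, s k ∈ Slice 𝕜 f α) ∧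
    x = ∑ k, ((t k : 𝕜) * ω k) • s k}

/-- A Banach space `X` over `𝕜 = ℝ` or `ℂ` is *lush* if for all `u, v` in the unit sphere and
every `ε > 0` there is a norm-one functional `f` with `u ∈ S(B_X, f, ε)` and
`dist(v, conv(𝕋 · S(B_X, f, ε))) < ε`. -/
def IsLush (𝕜 X : Type*) [RCLike 𝕜] [NormedAddCommGroup X] [NormedSpace 𝕜 X] : Prop :=
  ∀ u v : X, ‖u‖ = 1 → ‖v‖ = 1 → ∀ ε : ℝ, 0 < ε →
    ∃ f : X →L[𝕜] 𝕜, ‖f‖ = 1 ∧ u ∈ Slice 𝕜 f ε ∧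
      Metric.infDist v (ConvRotSlice 𝕜 f ε) < ε


/-!
Embed `u, v ∈ S_{X_n}` into `ℓ^∞(X)` as `single n u, single n v` and take a functional `f` that
witnesses lushness there for `δ = min (ε/2) (1/2)`. Any `x` in the slice `S(f, δ)` splits as
`single n (x n) + r` with `r n = 0`; since `single n u + c r` lies in the unit ball for every
`|c| = 1`, `re f(single n u) + ‖f r‖ ≤ 1`, so `‖f r‖ < δ`. Hence the `n`-th coordinate maps
`S(f, δ)` into `S(g, 2δ)` for `g = f ∘ single n`, and after normalising `g` it maps
`conv(𝕋 · S(f, δ))` into `conv(𝕋 · S(g/‖g‖, ε))` without increasing distances.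
-/

open Metric Set

section Slices

variable {𝕜 E F : Type*} [RCLike 𝕜] [NormedAddCommGroup E] [NormedSpace 𝕜 E]
  [NormedAddCommGroup F] [NormedSpace 𝕜 F]

lemma slice_mono {f : E →L[𝕜] 𝕜} {α β : ℝ} (h : α ≤ β) : Slice 𝕜 f α ⊆ Slice 𝕜 f β :=
  fun _ hx => ⟨hx.1, by linarith [hx.2]⟩

lemma slice_subset_convRotSlice (f : E →L[𝕜] 𝕜) (α : ℝ) :
    Slice 𝕜 f α ⊆ ConvRotSlice 𝕜 f α :=
  fun x hx => ⟨1, fun _ => 1, fun _ => 1, fun _ => x, fun _ => zero_le_one, by simp,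
    fun _ => by simp, fun _ => hx, by simp⟩

lemma ne_zero_of_mem_slice {f : E →L[𝕜] 𝕜} {α : ℝ} (hα : α ≤ 1) {x : E}
    (hx : x ∈ Slice 𝕜 f α) : f ≠ 0 := by
  rintro rfl
  have hre := hx.2
  simp only [zero_apply, map_zero] at hre
  linarith

lemma slice_subset_slice_inv_norm_smul {g : E →L[𝕜] 𝕜} (hg : ‖g‖ ≤ 1) {α : ℝ} (hα : α ≤ 1) :
    Slice 𝕜 g α ⊆ Slice 𝕜 ((‖g‖⁻¹ : 𝕜) • g) α := by
  intro x hx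
  have hg0 : 0 < ‖g‖ := norm_pos_iff.2 (ne_zero_of_mem_slice hα hx)
  refine ⟨hx.1, ?_⟩
  calc 1 - α < RCLike.re (g x) := hx.2
    _ ≤ ‖g‖⁻¹ * RCLike.re (g x) :=
        le_mul_of_one_le_left (by linarith [hx.2]) ((one_le_inv₀ hg0).2 hg)
    _ = RCLike.re (((‖g‖⁻¹ : 𝕜) • g) x) := by
        rw [smul_apply, smul_eq_mul, ← RCLike.ofReal_inv, RCLike.re_ofReal_mul]

lemma mapsTo_convRotSlice (T : E →ₗ[𝕜] F) {f : E →L[𝕜] 𝕜} {g : F →L[𝕜] 𝕜} {α β : ℝ}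
    (h : MapsTo T (Slice 𝕜 f α) (Slice 𝕜 g β)) :
    MapsTo T (ConvRotSlice 𝕜 f α) (ConvRotSlice 𝕜 g β) := by
  rintro _ ⟨m, t, ω, s, ht, ht1, hω, hs, rfl⟩
  exact ⟨m, t, ω, T ∘ s, ht, ht1, hω, fun k => h (hs k), by simp [map_sum, map_smul]⟩

lemma re_add_norm_le_of_norm_add_smul_le {f : E →L[𝕜] 𝕜} (hf : ‖f‖ ≤ 1) {x y : E}
    (h : ∀ c : 𝕜, ‖c‖ = 1 → ‖x + c • y‖ ≤ 1) : RCLike.re (f x) + ‖f y‖ ≤ 1 := by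
  obtain ⟨c, hc, hcy⟩ := RCLike.exists_norm_eq_mul_self (f y)
  calc RCLike.re (f x) + ‖f y‖ = RCLike.re (f (x + c • y)) := by
        rw [map_add, map_smul, smul_eq_mul, ← hcy, map_add, RCLike.ofReal_re]
    _ ≤ ‖f (x + c • y)‖ := RCLike.re_le_norm _
    _ ≤ ‖f‖ * ‖x + c • y‖ := f.le_opNorm _
    _ ≤ 1 := mul_le_one₀ hf (norm_nonneg _) (h c hc)

end Slices

lemma Metric.infDist_le_infDist_of_mapsTo {α β : Type*} [PseudoMetricSpace α]
    [PseudoMetricSpace β] {T : α → β} (hT : LipschitzWith 1 T) {s : Set α} {t : Set β}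
    (hs : s.Nonempty) (hst : MapsTo T s t) (x : α) : infDist (T x) t ≤ infDist x s := by
  refine le_of_forall_gt_imp_ge_of_dense fun r hr => ?_
  obtain ⟨y, hy, hxy⟩ := (infDist_lt_iff hs).1 hr
  calc infDist (T x) t ≤ dist (T x) (T y) := infDist_le_dist_of_mem (hst hy)
    _ ≤ dist x y := by simpa using hT.dist_le_mul x y
    _ ≤ r := hxy.le

namespace lp

variable {𝕜 ι : Type*} [RCLike 𝕜] [DecidableEq ι] {X : ι → Type*}
  [∀ i, NormedAddCommGroup (X i)] [∀ i, NormedSpace 𝕜 (X i)]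

lemma norm_single_add_le_one {i : ι} {a : X i} (ha : ‖a‖ ≤ 1) {y : lp X ⊤} (hy : ‖y‖ ≤ 1)
    (hyi : y i = 0) : ‖lp.single ⊤ i a + y‖ ≤ 1 := by
  refine norm_le_of_forall_le zero_le_one fun j => ?_
  rw [coeFn_add, Pi.add_apply]
  by_cases hj : j = i
  · subst hj
    rwa [lp.single_apply_self, hyi, add_zero]
  · rw [lp.single_apply_ne _ _ _ hj, zero_add]
    exact (norm_apply_le_norm ENNReal.top_ne_zero y j).trans hy

lemma norm_sub_single_apply_le (x : lp X ⊤) (i : ι) : ‖x - lp.single ⊤ i (x i)‖ ≤ ‖x‖ := by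
  refine norm_le_of_forall_le (norm_nonneg x) fun j => ?_
  rw [coeFn_sub, Pi.sub_apply]
  by_cases hj : j = i
  · subst hj
    simp
  · rw [lp.single_apply_ne _ _ _ hj, sub_zero]
    exact norm_apply_le_norm ENNReal.top_ne_zero x j

lemma apply_mem_slice_comp_single {f : lp X ⊤ →L[𝕜] 𝕜} (hf : ‖f‖ ≤ 1) {i : ι} {u : X i}
    {δ : ℝ} (hu : lp.single ⊤ i u ∈ Slice 𝕜 f δ) {x : lp X ⊤} (hx : x ∈ Slice 𝕜 f δ) :
    x i ∈ Slice 𝕜 (f.comp (singleContinuousLinearMap 𝕜 X ⊤ i)) (2 * δ) := by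
  set r := x - lp.single ⊤ i (x i)
  have hr : ‖r‖ ≤ 1 := (norm_sub_single_apply_le x i).trans hx.1
  have hri : r i = 0 := by simp [r]
  have hfr : RCLike.re (f (lp.single ⊤ i u)) + ‖f r‖ ≤ 1 := by
    refine re_add_norm_le_of_norm_add_smul_le hf fun c hc => norm_single_add_le_one ?_ ?_ ?_
    · simpa [lp.norm_single] using hu.1
    · rwa [norm_smul, hc, one_mul]
    · simp [hri]
  have hsplit : RCLike.re (f x) = RCLike.re (f (lp.single ⊤ i (x i))) + RCLike.re (f r) := by
    rw [← map_add, ← map_add, add_sub_cancel]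
  refine ⟨(norm_apply_le_norm ENNReal.top_ne_zero x i).trans hx.1, ?_⟩
  simp only [ContinuousLinearMap.coe_comp, Function.comp_apply,
    singleContinuousLinearMap_apply]
  linarith [hu.2, hx.2, RCLike.re_le_norm (f r)]

end lp

theorem isLush_of_isLush_lpInfty_general {𝕜 : Type*} [RCLike 𝕜] {X : ℕ → Type*}
    [∀ n, NormedAddCommGroup (X n)] [∀ n, NormedSpace 𝕜 (X n)]
    (h : IsLush 𝕜 (lp X ⊤)) : ∀ n, IsLush 𝕜 (X n) := by
  intro n u v hu hv ε hε
  set δ := min (ε / 2) (1 / 2)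
  have hδ : 0 < δ := by positivity
  obtain ⟨f, hf, hfu, hfv⟩ :=
    h (lp.single ⊤ n u) (lp.single ⊤ n v) (by simpa) (by simpa) δ hδ
  set g := f.comp (lp.singleContinuousLinearMap 𝕜 X ⊤ n)
  have hg : ‖g‖ ≤ 1 := g.opNorm_le_bound zero_le_one fun x => by
    simpa [g, hf] using f.le_opNorm (lp.single ⊤ n x)
  have hδε : 2 * δ ≤ ε := by linarith [min_le_left (ε / 2) (1 / 2)]
  have hδ1 : 2 * δ ≤ 1 := by linarith [min_le_right (ε / 2) (1 / 2)]
  have hslice :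
      MapsTo (lp.evalₗ (𝕜 := 𝕜) X ⊤ n) (Slice 𝕜 f δ) (Slice 𝕜 ((‖g‖⁻¹ : 𝕜) • g) ε) :=
    fun x hx => slice_mono hδε <| slice_subset_slice_inv_norm_smul hg hδ1 <|
      lp.apply_mem_slice_comp_single hf.le hfu hx
  have hg0 : g ≠ 0 := ne_zero_of_mem_slice hδ1 (lp.apply_mem_slice_comp_single hf.le hfu hfu)
  refine ⟨_, norm_smul_inv_norm hg0, by simpa using hslice hfu, ?_⟩
  calc infDist v (ConvRotSlice 𝕜 ((‖g‖⁻¹ : 𝕜) • g) ε)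
      ≤ infDist (lp.single ⊤ n v) (ConvRotSlice 𝕜 f δ) := by
        simpa using infDist_le_infDist_of_mapsTo (lp.lipschitzWith_one_eval ⊤ n)
          ⟨_, slice_subset_convRotSlice f δ hfu⟩ (mapsTo_convRotSlice _ hslice) (lp.single ⊤ n v)
    _ < δ := hfv
    _ ≤ ε := by linarith

/-- If the ℓ^∞-sum of a sequence of nonzero Banach spaces is lush, then each summand is lush. -/
theorem isLush_of_isLush_lpInfty {𝕜 : Type*} [RCLike 𝕜] {X : ℕ → Type*}
    [∀ n, NormedAddCommGroup (X n)] [∀ n, NormedSpace 𝕜 (X n)]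
    [∀ n, CompleteSpace (X n)] [∀ n, Nontrivial (X n)]
    (h : IsLush 𝕜 (lp X ⊤)) : ∀ n, IsLush 𝕜 (X n) :=
  isLush_of_isLush_lpInfty_general h
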